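/- Let r : [−1,1] → ℝ be continuous, and let k, k' ∈ ℝ. Suppose φ, ψ : [−1,1] → ℝ are twice continuously differentiable, positive on (−1,1), with φ(−1) = φ(1) = ψ(−1) = ψ(1) = 0, and satisfy φ''(x) + x φ'(x) + r(x)φ(x) = k φ(x) and ψ''(x) − x ψ'(x) + r(x)ψ(x) = k' ψ(x) for all x ∈ [−1,1]. Then k = k' − 1. -/

import Mathlib

/-!
With `L φ = φ'' + b φ' + r φ`, the formal adjoint is `L* ψ = ψ'' - (b ψ)' + r ψ`, and the
Lagrange identity `(φ' ψ - φ ψ' + b φ ψ)' = (L φ) ψ - φ (L* ψ)` holds. For `b(x) = x` we get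
`L* ψ = ψ'' - x ψ' + (r - 1) ψ`, so `ψ` is an eigenfunction of `L*` with eigenvalue `k' - 1`
and the concomitant `W = φ' ψ - φ ψ' + x φ ψ` satisfies `W' = (k - (k' - 1)) φ ψ`.
Since `W` vanishes at `±1`, Rolle's theorem gives a zero of `W'` in `(-1, 1)`, where `φ ψ > 0`.
-/

open Set

noncomputable def bilinearConcomitant (b φ ψ : ℝ → ℝ) (y : ℝ) : ℝ :=
  deriv φ y * ψ y - φ y * deriv ψ y + b y * (φ y * ψ y)

theorem bilinearConcomitant_eq_zero_of_eq_zero {b φ ψ : ℝ → ℝ} {y : ℝ}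
    (hφ : φ y = 0) (hψ : ψ y = 0) : bilinearConcomitant b φ ψ y = 0 := by
  simp [bilinearConcomitant, hφ, hψ]

theorem hasDerivAt_bilinearConcomitant {b φ ψ : ℝ → ℝ} {x : ℝ}
    (hb : DifferentiableAt ℝ b x)
    (hφ : DifferentiableAt ℝ φ x) (hφ' : DifferentiableAt ℝ (deriv φ) x)
    (hψ : DifferentiableAt ℝ ψ x) (hψ' : DifferentiableAt ℝ (deriv ψ) x) :
    HasDerivAt (bilinearConcomitant b φ ψ)
      ((deriv (deriv φ) x + b x * deriv φ x) * ψ x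
        - φ x * (deriv (deriv ψ) x - b x * deriv ψ x - deriv b x * ψ x)) x := by
  refine (((hφ'.hasDerivAt.mul hψ.hasDerivAt).sub (hφ.hasDerivAt.mul hψ'.hasDerivAt)).add
    (hb.hasDerivAt.mul (hφ.hasDerivAt.mul hψ.hasDerivAt))).congr_deriv ?_
  rw [Pi.mul_apply]
  ring

theorem stmt13 (r : ℝ → ℝ) (k k' : ℝ)
    (φ ψ : ℝ → ℝ) (hφ : ContDiff ℝ 2 φ) (hψ : ContDiff ℝ 2 ψ)
    (hφpos : ∀ x ∈ Set.Ioo (-1:ℝ) 1, 0 < φ x)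
    (hψpos : ∀ x ∈ Set.Ioo (-1:ℝ) 1, 0 < ψ x)
    (hφbd : φ (-1) = 0 ∧ φ 1 = 0) (hψbd : ψ (-1) = 0 ∧ ψ 1 = 0)
    (heqφ : ∀ x ∈ Set.Icc (-1:ℝ) 1,
      deriv (deriv φ) x + x * deriv φ x + r x * φ x = k * φ x)
    (heqψ : ∀ x ∈ Set.Icc (-1:ℝ) 1,
      deriv (deriv ψ) x - x * deriv ψ x + r x * ψ x = k' * ψ x) :
    k = k' - 1 := by
  set W := bilinearConcomitant id φ ψ
  have hW : ∀ x ∈ Icc (-1:ℝ) 1, HasDerivAt W ((k - (k' - 1)) * (φ x * ψ x)) x := by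
    intro x hx
    convert hasDerivAt_bilinearConcomitant differentiableAt_id
      (hφ.differentiable two_ne_zero x) (hφ.differentiable_deriv_two x)
      (hψ.differentiable two_ne_zero x) (hψ.differentiable_deriv_two x) using 1
    simp only [deriv_id, id]
    linear_combination φ x * heqψ x hx - ψ x * heqφ x hx
  have hW_bd : W (-1) = W 1 :=
    (bilinearConcomitant_eq_zero_of_eq_zero hφbd.1 hψbd.1).trans
      (bilinearConcomitant_eq_zero_of_eq_zero hφbd.2 hψbd.2).symm
  obtain ⟨ξ, hξ, hW'ξ⟩ := exists_hasDerivAt_eq_zero (by norm_num)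
    (fun x hx => (hW x hx).continuousAt.continuousWithinAt) hW_bd
    (fun x hx => hW x (Ioo_subset_Icc_self hx))
  have hφψ : φ ξ * ψ ξ ≠ 0 := (mul_pos (hφpos ξ hξ) (hψpos ξ hξ)).ne'
  linarith [(mul_eq_zero.mp hW'ξ).resolve_right hφψ]
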